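/- Let G be a finite simple graph on vertex set V with |V| ≥ 2, and let a, b be two distinct vertices. Then G admits a linked order whose first two vertices are a and b if and only if a and b are adjacent and, for every set S of vertices with {a, b} ⊆ S and S ≠ V, there exists a vertex c ∉ S having at least two neighbors in S. -/

import Mathlib

/-! A linked order starting with `a, b` exists iff the greedy procedure never gets stuck: starting
from `[a, b]`, as long as the placed vertices `S` are not all of `V`, append some vertex outside `S`
with two neighbours in `S`. Conversely, in a linked order the first vertex outside a given `S ⊇ {a, b}`
has two neighbours among the earlier vertices, all of which lie in `S`. -/

/-- A linked order of a finite simple graph `G` is an enumeration of all vertices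
(as a duplicate-free list containing every vertex) such that the first two vertices
are adjacent and every vertex in position `i ≥ 3` (1-indexed; i.e., preceded by at
least two vertices) has at least two neighbors among the preceding vertices. -/
def IsLinkedOrder {V : Type*} [Fintype V] [DecidableEq V]
    (G : SimpleGraph V) [DecidableRel G.Adj] (l : List V) : Prop :=
  (∀ v : V, v ∈ l) ∧ l.Nodup ∧
  (∀ a b rest, l = a :: b :: rest → G.Adj a b) ∧
  (∀ pre c suf, l = pre ++ c :: suf → 2 ≤ pre.length →
    2 ≤ (pre.toFinset ∩ G.neighborFinset c).card)

theorem List.exists_eq_append_cons_of_exists_not {α : Type*} {p : α → Prop} [DecidablePred p]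
    {l : List α} (h : ∃ x ∈ l, ¬ p x) :
    ∃ pre c suf, l = pre ++ c :: suf ∧ ¬ p c ∧ ∀ x ∈ pre, p x := by
  have : (l.find? fun x => !decide (p x)).isSome := List.find?_isSome.mpr (by simpa using h)
  obtain ⟨c, hc⟩ := Option.isSome_iff_exists.mp this
  obtain ⟨hpc, pre, suf, rfl, hpre⟩ := List.find?_eq_some_iff_append.mp hc
  exact ⟨pre, c, suf, rfl, by simpa using hpc, fun x hx => by simpa using hpre x hx⟩

namespace SimpleGraph

variable {V : Type*} [Fintype V] [DecidableEq V] (G : SimpleGraph V) [DecidableRel G.Adj]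

-- The last clause of `IsLinkedOrder`.
def HasTwoEarlierNeighbors (l : List V) : Prop :=
  ∀ pre c suf, l = pre ++ c :: suf → 2 ≤ pre.length →
    2 ≤ (pre.toFinset ∩ G.neighborFinset c).card

variable {G}

theorem hasTwoEarlierNeighbors_pair (a b : V) : G.HasTwoEarlierNeighbors [a, b] := by
  intro pre c suf h hlen
  have := congrArg List.length h
  simp only [List.length_append, List.length_cons, List.length_nil] at this
  omega

theorem HasTwoEarlierNeighbors.append_singleton {l : List V} {c : V}
    (hl : G.HasTwoEarlierNeighbors l) (hc : 2 ≤ (l.toFinset ∩ G.neighborFinset c).card) :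
    G.HasTwoEarlierNeighbors (l ++ [c]) := by
  intro pre d suf h hlen
  rcases List.eq_nil_or_concat suf with rfl | ⟨suf, x, rfl⟩
  · obtain ⟨rfl, rfl⟩ := List.concat_inj.mp (by simpa using h.symm)
    exact hc
  · have : (pre ++ d :: suf).concat x = l.concat c := by simpa using h.symm
    exact hl pre d suf (List.concat_inj.mp this).1.symm hlen

theorem HasTwoEarlierNeighbors.exists_outside {a b : V} {rest : List V}
    (hl : G.HasTwoEarlierNeighbors (a :: b :: rest)) {S : Finset V} (ha : a ∈ S) (hb : b ∈ S)
    (hS : ∃ v ∈ rest, v ∉ S) : ∃ c ∉ S, 2 ≤ (G.neighborFinset c ∩ S).card := by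
  obtain ⟨pre, c, suf, rfl, hc, hpre⟩ := List.exists_eq_append_cons_of_exists_not hS
  have hsub : (a :: b :: pre).toFinset ⊆ S := by
    intro x
    simp only [List.mem_toFinset, List.mem_cons]
    rintro (rfl | rfl | hx) <;> simp_all
  refine ⟨c, hc, (hl (a :: b :: pre) c suf rfl (by simp)).trans (Finset.card_le_card ?_)⟩
  rw [Finset.inter_comm]
  exact Finset.inter_subset_inter_left hsub

theorem exists_linked_extension {a b : V}
    (H : ∀ S : Finset V, a ∈ S → b ∈ S → S ≠ Finset.univ →
      ∃ c ∉ S, 2 ≤ (G.neighborFinset c ∩ S).card)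
    (l : List V) (hnd : l.Nodup) (ha : a ∈ l) (hb : b ∈ l) (hl : G.HasTwoEarlierNeighbors l) :
    ∃ ext : List V, (∀ v, v ∈ l ++ ext) ∧ (l ++ ext).Nodup ∧
      G.HasTwoEarlierNeighbors (l ++ ext) := by
  by_cases huniv : l.toFinset = Finset.univ
  · exact ⟨[], by simpa [Finset.eq_univ_iff_forall] using huniv, by simpa, by simpa⟩
  obtain ⟨c, hcl, hc⟩ := H l.toFinset (by simpa) (by simpa) huniv
  have hnd' : (l ++ [c]).Nodup := by simpa using hnd.concat (by simpa using hcl)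
  have : Fintype.card V - (l ++ [c]).length < Fintype.card V - l.length := by
    have := hnd'.length_le_card
    simp only [List.length_append, List.length_singleton] at this ⊢
    omega
  obtain ⟨ext, hall, hnd'', hext⟩ := exists_linked_extension H (l ++ [c]) hnd'
    (by simp [ha]) (by simp [hb]) (hl.append_singleton (by rwa [Finset.inter_comm]))
  exact ⟨c :: ext, by simpa using hall, by simpa using hnd'', by simpa using hext⟩
termination_by Fintype.card V - l.length

end SimpleGraph

open SimpleGraph in
theorem linked_order_from_ab_iff_general {V : Type*} [Fintype V] [DecidableEq V]
    (G : SimpleGraph V) [DecidableRel G.Adj]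
    (a b : V) :
    (∃ rest : List V, IsLinkedOrder G (a :: b :: rest)) ↔
      (G.Adj a b ∧ ∀ S : Finset V, a ∈ S → b ∈ S → S ≠ Finset.univ →
        ∃ c ∉ S, 2 ≤ (G.neighborFinset c ∩ S).card) := by
  constructor
  · rintro ⟨rest, hall, -, hadj, hlinked : G.HasTwoEarlierNeighbors _⟩
    refine ⟨hadj a b rest rfl, fun S ha hb hS => hlinked.exists_outside ha hb ?_⟩
    obtain ⟨v, hv⟩ : ∃ v, v ∉ S := by simpa [Finset.eq_univ_iff_forall] using hS
    have hva : v ≠ a := fun h => hv (h ▸ ha)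
    have hvb : v ≠ b := fun h => hv (h ▸ hb)
    exact ⟨v, by simpa [hva, hvb] using hall v, hv⟩
  · rintro ⟨hadj, H⟩
    obtain ⟨ext, hall, hnd, hlinked⟩ := exists_linked_extension H [a, b]
      (by simpa using hadj.ne) (by simp) (by simp) (hasTwoEarlierNeighbors_pair a b)
    refine ⟨ext, hall, hnd, ?_, hlinked⟩
    rintro a' b' rest ⟨⟩
    exact hadj

/-- `G` admits a linked order starting with distinct vertices `a, b` iff `a` and `b`
are adjacent and every vertex set `S` with `{a,b} ⊆ S ≠ V` admits a vertex outside `S`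
with at least two neighbors in `S`. -/
theorem linked_order_from_ab_iff {V : Type*} [Fintype V] [DecidableEq V]
    (G : SimpleGraph V) [DecidableRel G.Adj]
    (hm : 2 ≤ Fintype.card V) (a b : V) (hab : a ≠ b) :
    (∃ rest : List V, IsLinkedOrder G (a :: b :: rest)) ↔
      (G.Adj a b ∧ ∀ S : Finset V, a ∈ S → b ∈ S → S ≠ Finset.univ →
        ∃ c ∉ S, 2 ≤ (G.neighborFinset c ∩ S).card) :=
  linked_order_from_ab_iff_general G a b
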